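/- arXiv:2202.12725 — 2 statements merged into one kernel-verified Lean document; each statement's English description precedes it below -/
import Mathlib

section
/- Let U be a p x p orthogonal matrix with columns u_1,...,u_p, let R be a symmetric positive-definite p x p matrix, and set sigma_i^2 = u_i' R u_i (which is positive for each i). For d = (d_1,...,d_p) with all d_i > 0, define the shrinkage matrix Rhat_d = U diag(d_1,...,d_p) U'. Then tr(Rhat_d^{-1})^2 / ( p * tr(Rhat_d^{-1} R Rhat_d^{-1}) ) <= (1/p) * sum_{i=1}^p 1/sigma_i^2, with equality if and only if there exists a constant kappa > 0 such that d_i = kappa * sigma_i^2 for all i. In particular, among all shrinkage matrices Rhat_d with the eigenvectors of U, the signal-to-noise ratio proxy tr(Rhat_d^{-1})^2 / ( p * tr(Rhat_d^{-1} R Rhat_d^{-1}) ) is maximized exactly when d_i is proportional to sigma_i^2 = u_i' R u_i. -/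
open Matrix

/-!
Since `Uᵀ U = 1`, `R̂_d⁻¹ = U diag(1/d) Uᵀ`, so `tr R̂_d⁻¹ = ∑ 1/dᵢ` and
`tr(R̂_d⁻¹ R R̂_d⁻¹) = ∑ σᵢ²/dᵢ²`. The claim is then Sedrakyan's form of Cauchy–Schwarz,
`(∑ fᵢ)² / ∑ gᵢ ≤ ∑ fᵢ²/gᵢ`, for `fᵢ = 1/dᵢ` and `gᵢ = σᵢ²/dᵢ²`, whose equality case
`f ∝ g` reads `d ∝ σ²`.
-/

namespace Finset

variable {ι K : Type*} [Field K] (s : Finset ι) (f : ι → K) {g : ι → K}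

theorem sum_sq_sub_mul_div_eq (hg : ∀ i ∈ s, g i ≠ 0) (κ : K) :
    ∑ i ∈ s, (f i - κ * g i) ^ 2 / g i =
      ∑ i ∈ s, f i ^ 2 / g i - 2 * κ * ∑ i ∈ s, f i + κ ^ 2 * ∑ i ∈ s, g i := by
  rw [mul_sum, mul_sum, ← sum_sub_distrib, ← sum_add_distrib]
  refine sum_congr rfl fun i hi => ?_
  field_simp [hg i hi]
  ring

variable [LinearOrder K] [IsStrictOrderedRing K]

theorem sq_sum_div_eq_sum_sq_div_iff (hg : ∀ i ∈ s, 0 < g i) :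
    (∑ i ∈ s, f i) ^ 2 / ∑ i ∈ s, g i = ∑ i ∈ s, f i ^ 2 / g i ↔
      ∃ κ, ∀ i ∈ s, f i = κ * g i := by
  have hg₀ : ∀ i ∈ s, g i ≠ 0 := fun i hi => (hg i hi).ne'
  constructor
  · intro heq
    rcases s.eq_empty_or_nonempty with rfl | hs
    · exact ⟨0, by simp⟩
    have hG : 0 < ∑ i ∈ s, g i := sum_pos hg hs
    -- at the least-squares ratio `κ`, the weighted residual sum is the Cauchy–Schwarz defect
    obtain ⟨κ, hκ⟩ : ∃ κ, κ = (∑ i ∈ s, f i) / ∑ i ∈ s, g i := ⟨_, rfl⟩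
    have hres : ∑ i ∈ s, (f i - κ * g i) ^ 2 / g i = 0 := by
      rw [sum_sq_sub_mul_div_eq s f hg₀, ← heq, hκ]
      field_simp
      ring
    refine ⟨κ, fun i hi => ?_⟩
    have hi0 := (sum_eq_zero_iff_of_nonneg fun j hj => div_nonneg (sq_nonneg _) (hg j hj).le).mp
      hres i hi
    rw [div_eq_zero_iff, or_iff_left (hg₀ i hi), sq_eq_zero_iff, sub_eq_zero] at hi0
    exact hi0
  · rintro ⟨κ, hκ⟩
    have hF : ∑ i ∈ s, f i = κ * ∑ i ∈ s, g i := by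
      rw [mul_sum]; exact sum_congr rfl hκ
    have hsq : ∑ i ∈ s, f i ^ 2 / g i = κ ^ 2 * ∑ i ∈ s, g i := by
      rw [mul_sum]
      refine sum_congr rfl fun i hi => ?_
      rw [hκ i hi]
      field_simp [hg₀ i hi]
    rw [hF, hsq]
    rcases eq_or_ne (∑ i ∈ s, g i) 0 with hG | hG
    · simp [hG]
    · field_simp

end Finset

section Shrinkage

variable {ι K : Type*} [Fintype ι] [Field K] {v d : ι → K}

theorem sum_one_div_sq_div_div_sq (hv : ∀ i, v i ≠ 0) (hd : ∀ i, d i ≠ 0) :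
    ∑ i, (1 / d i) ^ 2 / (v i / d i ^ 2) = ∑ i, 1 / v i :=
  Finset.sum_congr rfl fun i _ => by field_simp [hd i, hv i]

variable [LinearOrder K] [IsStrictOrderedRing K]

theorem sq_sum_one_div_div_sum_div_sq_le (hv : ∀ i, 0 < v i) (hd : ∀ i, 0 < d i) :
    (∑ i, 1 / d i) ^ 2 / ∑ i, v i / d i ^ 2 ≤ ∑ i, 1 / v i :=
  sum_one_div_sq_div_div_sq (fun i => (hv i).ne') (fun i => (hd i).ne') ▸
    Finset.sq_sum_div_le_sum_sq_div _ _ fun i _ => div_pos (hv i) (pow_pos (hd i) 2)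

theorem sq_sum_one_div_div_sum_div_sq_eq_iff (hv : ∀ i, 0 < v i) (hd : ∀ i, 0 < d i) :
    (∑ i, 1 / d i) ^ 2 / ∑ i, v i / d i ^ 2 = ∑ i, 1 / v i ↔ ∃ κ > 0, ∀ i, d i = κ * v i := by
  rw [← sum_one_div_sq_div_div_sq (fun i => (hv i).ne') (fun i => (hd i).ne'),
    Finset.sq_sum_div_eq_sum_sq_div_iff _ _ fun i _ => div_pos (hv i) (pow_pos (hd i) 2)]
  have hprop : ∀ κ i, 1 / d i = κ * (v i / d i ^ 2) ↔ d i = κ * v i := fun κ i => by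
    field_simp [(hd i).ne']
  simp only [Finset.mem_univ, true_implies, hprop]
  constructor
  · rintro ⟨κ, hκ⟩
    rcases isEmpty_or_nonempty ι with hι | ⟨⟨i⟩⟩
    · exact ⟨1, one_pos, isEmptyElim⟩
    · exact ⟨κ, pos_of_mul_pos_left ((hκ i) ▸ hd i) (hv i).le, hκ⟩
  · rintro ⟨κ, -, hκ⟩
    exact ⟨κ, hκ⟩

end Shrinkage

namespace Matrix

variable {n α : Type*} [Fintype n]

theorem transpose_mul_mul_apply [CommRing α] (U R : Matrix n n α) (i j : n) :
    (Uᵀ * R * U) i j = Uᵀ i ⬝ᵥ R *ᵥ Uᵀ j := by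
  rw [mul_assoc]
  rfl

variable [DecidableEq n]

section CommRing

variable [CommRing α] {U : Matrix n n α}

theorem inv_conj_eq_of_transpose_mul_self (hU : Uᵀ * U = 1) (M : Matrix n n α) :
    (U * M * Uᵀ)⁻¹ = U * M⁻¹ * Uᵀ := by
  rw [mul_inv_rev, mul_inv_rev, inv_eq_left_inv hU, inv_eq_right_inv hU, mul_assoc]

theorem trace_conj_of_transpose_mul_self (hU : Uᵀ * U = 1) (M : Matrix n n α) :
    (U * M * Uᵀ).trace = M.trace := by
  rw [trace_mul_comm, ← mul_assoc, hU, one_mul]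

theorem trace_diagonal_mul_mul_diagonal (a : n → α) (M : Matrix n n α) :
    (diagonal a * M * diagonal a).trace = ∑ i, a i ^ 2 * M i i := by
  simp only [trace, diag, mul_diagonal, diagonal_mul]
  exact Finset.sum_congr rfl fun i _ => by ring

theorem transpose_apply_ne_zero_of_transpose_mul_self [Nontrivial α] (hU : Uᵀ * U = 1) (i : n) :
    Uᵀ i ≠ 0 := by
  intro h
  have := congr_fun₂ hU i i
  rw [mul_apply', h, zero_dotProduct, one_apply_eq] at this
  exact zero_ne_one this

end CommRing

theorem inv_diagonal_of_ne_zero {K : Type*} [Field K] {v : n → K} (hv : ∀ i, v i ≠ 0) :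
    (diagonal v)⁻¹ = diagonal v⁻¹ :=
  inv_eq_right_inv <| by
    rw [diagonal_mul_diagonal, ← diagonal_one]
    exact congrArg diagonal (funext fun i => mul_inv_cancel₀ (hv i))

end Matrix

/-- for an orthogonal `U` with columns `u_i`, a symmetric positive-definite
`R`, `σ_i² = u_i' R u_i > 0`, and shrinkage matrices `R̂_d = U diag(d) U'` with `d_i > 0`,
the SNR proxy satisfies `tr(R̂_d⁻¹)² / (p tr(R̂_d⁻¹ R R̂_d⁻¹)) ≤ (1/p) ∑ 1/σ_i²`, with
equality iff `d_i = κ σ_i²` for some `κ > 0`; i.e. the proxy is maximized exactly when the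
shrunken eigenvalues are proportional to `σ_i² = u_i' R u_i`. -/
theorem shrinkage_snr_optimality
    {p : ℕ} (U R : Matrix (Fin p) (Fin p) ℝ) (hU : Uᵀ * U = 1) (hR : R.PosDef)
    (d : Fin p → ℝ) (hd : ∀ i, 0 < d i) :
    (∀ i, 0 < Uᵀ i ⬝ᵥ R.mulVec (Uᵀ i)) ∧
    ((U * Matrix.diagonal d * Uᵀ)⁻¹.trace ^ 2 /
        (p * ((U * Matrix.diagonal d * Uᵀ)⁻¹ * R * (U * Matrix.diagonal d * Uᵀ)⁻¹).trace) ≤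
      (1 / p) * ∑ i, 1 / (Uᵀ i ⬝ᵥ R.mulVec (Uᵀ i))) ∧
    ((U * Matrix.diagonal d * Uᵀ)⁻¹.trace ^ 2 /
        (p * ((U * Matrix.diagonal d * Uᵀ)⁻¹ * R * (U * Matrix.diagonal d * Uᵀ)⁻¹).trace) =
      (1 / p) * ∑ i, 1 / (Uᵀ i ⬝ᵥ R.mulVec (Uᵀ i)) ↔
        ∃ κ > (0 : ℝ), ∀ i, d i = κ * (Uᵀ i ⬝ᵥ R.mulVec (Uᵀ i))) := by
  have hσ : ∀ i, 0 < Uᵀ i ⬝ᵥ R *ᵥ Uᵀ i := fun i => by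
    simpa using hR.dotProduct_mulVec_pos (transpose_apply_ne_zero_of_transpose_mul_self hU i)
  have hinv : (U * diagonal d * Uᵀ)⁻¹ = U * diagonal d⁻¹ * Uᵀ := by
    rw [inv_conj_eq_of_transpose_mul_self hU, inv_diagonal_of_ne_zero fun i => (hd i).ne']
  have htr : (U * diagonal d * Uᵀ)⁻¹.trace = ∑ i, 1 / d i := by
    simp [hinv, trace_conj_of_transpose_mul_self hU]
  have htrR : ((U * diagonal d * Uᵀ)⁻¹ * R * (U * diagonal d * Uᵀ)⁻¹).trace =
      ∑ i, (Uᵀ i ⬝ᵥ R *ᵥ Uᵀ i) / d i ^ 2 := by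
    have hconj : U * diagonal d⁻¹ * Uᵀ * R * (U * diagonal d⁻¹ * Uᵀ) =
        U * (diagonal d⁻¹ * (Uᵀ * R * U) * diagonal d⁻¹) * Uᵀ := by
      simp only [Matrix.mul_assoc]
    rw [hinv, hconj, trace_conj_of_transpose_mul_self hU, trace_diagonal_mul_mul_diagonal]
    simp [transpose_mul_mul_apply, div_eq_inv_mul]
  refine ⟨hσ, ?_⟩
  have hsplit : ∀ x y : ℝ, x / (p * y) = 1 / p * (x / y) := fun x y => by ring
  rw [htr, htrR, hsplit]
  rcases Nat.eq_zero_or_pos p with rfl | hp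
  · simpa using exists_gt (0 : ℝ)
  · have hp' : 1 / (p : ℝ) ≠ 0 := by positivity
    exact ⟨mul_le_mul_of_nonneg_left (sq_sum_one_div_div_sum_div_sq_le hσ hd) (by positivity),
      (mul_right_inj' hp').trans (sq_sum_one_div_div_sum_div_sq_eq_iff hσ hd)⟩
end

section
/- Let x_1,...,x_n be i.i.d. random vectors in R^p with x_j ~ N(mu, R) for a symmetric positive-definite p x p matrix R and n >= 2. Let xbar = (1/n) * sum_{j=1}^n x_j be the sample mean and let S = (1/(n-1)) * sum_{j=1}^n (x_j - xbar)(x_j - xbar)' be the sample covariance matrix. Then xbar and S are independent. -/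
/-!
A family of independent Gaussian vectors is jointly Gaussian, hence so is its linear image
`(x̄, (x_j - x̄)_j)`. If `C` is the common covariance of the `x_j`, independence gives
`Cov(x̄_i, x_{j,k}) = C_{ik} / n = Cov(x̄_i, x̄_k)`, so `x̄` is uncorrelated with every deviation
`x_j - x̄`. Uncorrelated jointly Gaussian vectors are independent, and `S` is a function of the
deviations alone.
-/

open MeasureTheory ProbabilityTheory Matrix Filter
open scoped ENNReal NNReal Topology

/-- The standard Gaussian measure on `ℝ^p` (i.i.d. standard normal coordinates). -/
noncomputable def stdGaussian (p : ℕ) : Measure (Fin p → ℝ) :=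
  Measure.pi fun _ => gaussianReal 0 1

/-- The positive semidefinite square root of a positive semidefinite matrix
(the definition Mathlib had in December 2024, since removed). -/
noncomputable def Matrix.PosSemidef.sqrt {n : Type*} [Fintype n] [DecidableEq n]
    {A : Matrix n n ℝ} (hA : A.PosSemidef) : Matrix n n ℝ :=
  (hA.1.eigenvectorUnitary : Matrix n n ℝ) * diagonal ((√·) ∘ hA.1.eigenvalues) *
    (star hA.1.eigenvectorUnitary : Matrix n n ℝ)

/-- The multivariate Gaussian measure `N(μ, R)` on `ℝ^p`, for `R` positive semidefinite,
defined as the law of `μ + R^{1/2} w` with `w` standard Gaussian. -/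
noncomputable def mvGaussian {p : ℕ} (μ : Fin p → ℝ) {R : Matrix (Fin p) (Fin p) ℝ}
    (hR : R.PosSemidef) : Measure (Fin p → ℝ) :=
  (stdGaussian p).map fun w => μ + hR.sqrt.mulVec w

instance isGaussian_stdGaussian_pi (p : ℕ) : IsGaussian (stdGaussian p) := by
  have h : stdGaussian p = (ProbabilityTheory.stdGaussian (EuclideanSpace ℝ (Fin p))).map
      (PiLp.continuousLinearEquiv 2 ℝ fun _ : Fin p ↦ ℝ) := by
    rw [← map_pi_eq_stdGaussian, Measure.map_map (by fun_prop) (by fun_prop)]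
    exact Measure.map_id.symm
  rw [h]
  infer_instance

lemma isGaussian_map_affine {p : ℕ} (μ : Fin p → ℝ) (Q : Matrix (Fin p) (Fin p) ℝ) :
    IsGaussian ((stdGaussian p).map fun w ↦ μ + Q *ᵥ w) := by
  have h : (fun w ↦ μ + Q *ᵥ w) = (μ + ·) ∘ LinearMap.toContinuousLinearMap Q.mulVecLin := rfl
  rw [h, ← Measure.map_map (by fun_prop) (by fun_prop)]
  infer_instance

instance isGaussian_mvGaussian {p : ℕ} (μ : Fin p → ℝ) {R : Matrix (Fin p) (Fin p) ℝ}
    (hR : R.PosSemidef) :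
    IsGaussian (mvGaussian μ hR) :=
  isGaussian_map_affine μ hR.sqrt

section SampleMean

variable {ι E : Type*} [Fintype ι] [AddCommGroup E] [Module ℝ E] [TopologicalSpace E]
  [IsTopologicalAddGroup E] [ContinuousConstSMul ℝ E]

noncomputable def sampleMean : (ι → E) →L[ℝ] E :=
  (Fintype.card ι : ℝ)⁻¹ • ∑ j, ContinuousLinearMap.proj j

lemma sampleMean_apply (y : ι → E) : sampleMean y = (Fintype.card ι : ℝ)⁻¹ • ∑ j, y j := by
  simp [sampleMean]

lemma sampleMean_apply_apply {α : Type*} (y : ι → α → ℝ) (i : α) :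
    sampleMean y i = (Fintype.card ι : ℝ)⁻¹ * ∑ j, y j i := by
  simp [sampleMean_apply, Finset.sum_apply]

end SampleMean

section GaussianSample

variable {Ω ι κ : Type*} [MeasurableSpace Ω] {P : Measure Ω} {x : ι → Ω → κ → ℝ}
  {ν : Measure (κ → ℝ)} [IsGaussian ν]

lemma covariance_apply_of_iIndepFun [DecidableEq ι] (hindep : iIndepFun x P)
    (hlaw : ∀ j, HasLaw (x j) ν P) (l m : ι) (i k : κ) :
    cov[fun ω ↦ x l ω i, fun ω ↦ x m ω k; P] =
      if l = m then cov[fun y ↦ y i, fun y ↦ y k; ν] else 0 := by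
  split_ifs with hlm
  · subst hlm
    rw [← (hlaw l).map_eq, covariance_map (measurable_pi_apply i).aestronglyMeasurable
      (measurable_pi_apply k).aestronglyMeasurable (hlaw l).aemeasurable]
    rfl
  · exact ((hindep.indepFun hlm).comp (measurable_pi_apply i)
      (measurable_pi_apply k)).covariance_eq_zero
      ((hlaw l).hasGaussianLaw.eval i).memLp_two ((hlaw m).hasGaussianLaw.eval k).memLp_two

lemma memLp_two_sampleMean_apply [Fintype ι] (hlaw : ∀ j, HasLaw (x j) ν P) (i : κ) :
    MemLp (fun ω ↦ sampleMean (x · ω) i) 2 P := by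
  simp_rw [sampleMean_apply_apply]
  exact (memLp_finsetSum _ fun l _ ↦ ((hlaw l).hasGaussianLaw.eval i).memLp_two).const_mul _

variable [IsProbabilityMeasure P] [Fintype ι] [DecidableEq ι]

lemma covariance_sampleMean_apply_left (hindep : iIndepFun x P) (hlaw : ∀ j, HasLaw (x j) ν P)
    (m : ι) (i k : κ) :
    cov[fun ω ↦ sampleMean (x · ω) i, fun ω ↦ x m ω k; P] =
      (Fintype.card ι : ℝ)⁻¹ * cov[fun y ↦ y i, fun y ↦ y k; ν] := by
  simp_rw [sampleMean_apply_apply]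
  rw [covariance_const_mul_left, covariance_fun_sum_left
    (fun l ↦ ((hlaw l).hasGaussianLaw.eval i).memLp_two) ((hlaw m).hasGaussianLaw.eval k).memLp_two]
  simp [covariance_apply_of_iIndepFun hindep hlaw]

lemma covariance_sampleMean_apply_sampleMean_apply (hindep : iIndepFun x P)
    (hlaw : ∀ j, HasLaw (x j) ν P) (i k : κ) :
    cov[fun ω ↦ sampleMean (x · ω) i, fun ω ↦ sampleMean (x · ω) k; P] =
      (Fintype.card ι : ℝ)⁻¹ * cov[fun y ↦ y i, fun y ↦ y k; ν] := by
  conv_lhs => arg 2; ext ω; rw [sampleMean_apply_apply]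
  rw [covariance_const_mul_right, covariance_fun_sum_right
    (fun l ↦ ((hlaw l).hasGaussianLaw.eval k).memLp_two) (memLp_two_sampleMean_apply hlaw i)]
  simp only [covariance_sampleMean_apply_left hindep hlaw, Finset.sum_const, Finset.card_univ,
    nsmul_eq_mul, ← mul_assoc]
  congr 1
  simpa using mul_inv_mul_cancel (Fintype.card ι : ℝ)⁻¹

lemma covariance_sampleMean_apply_deviation_apply (hindep : iIndepFun x P)
    (hlaw : ∀ j, HasLaw (x j) ν P) (j : ι) (i k : κ) :
    cov[fun ω ↦ sampleMean (x · ω) i, fun ω ↦ x j ω k - sampleMean (x · ω) k; P] = 0 := by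
  rw [covariance_fun_sub_right (memLp_two_sampleMean_apply hlaw i)
    ((hlaw j).hasGaussianLaw.eval k).memLp_two (memLp_two_sampleMean_apply hlaw k),
    covariance_sampleMean_apply_left hindep hlaw,
    covariance_sampleMean_apply_sampleMean_apply hindep hlaw, sub_self]

theorem indepFun_sampleMean_deviation [Fintype κ] (hindep : iIndepFun x P)
    (hlaw : ∀ j, HasLaw (x j) ν P) :
    IndepFun (fun ω ↦ sampleMean (x · ω)) (fun ω j ↦ x j ω - sampleMean (x · ω)) P := by
  -- deviations are indexed by `ι × κ`, so that both sides are families of real coordinates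
  let L : (ι → κ → ℝ) →L[ℝ] (κ → ℝ) × (ι × κ → ℝ) := sampleMean.prod
    (ContinuousLinearMap.pi fun jk ↦
      ContinuousLinearMap.proj jk.2 ∘L (ContinuousLinearMap.proj jk.1 - sampleMean))
  have hjoint : HasGaussianLaw (fun ω ↦ L (x · ω)) P :=
    (hindep.hasGaussianLaw fun j ↦ (hlaw j).hasGaussianLaw).map_fun L
  have hflat := hjoint.indepFun_of_covariance_eval
    fun i jk ↦ covariance_sampleMean_apply_deviation_apply hindep hlaw jk.1 i jk.2
  exact hflat.comp (ψ := fun d j k ↦ d (j, k)) measurable_id (by fun_prop)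

end GaussianSample

theorem sample_mean_sample_covariance_independent_general
    {Ω : Type*} [MeasureSpace Ω] [IsProbabilityMeasure (ℙ : Measure Ω)]
    {p n : ℕ} (μ : Fin p → ℝ) (R : Matrix (Fin p) (Fin p) ℝ) (hR : R.PosDef)
    (x : Fin n → Ω → Fin p → ℝ) (hmeas : ∀ j, Measurable (x j))
    (hindep : iIndepFun x ℙ)
    (hgauss : ∀ j, Measure.map (x j) ℙ = mvGaussian μ hR.posSemidef) :
    IndepFun (fun ω => (n : ℝ)⁻¹ • ∑ j, x j ω)
      (fun ω (i k : Fin p) => ((n : ℝ) - 1)⁻¹ *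
        ∑ j, (x j ω i - ((n : ℝ)⁻¹ • ∑ j', x j' ω) i) *
          (x j ω k - ((n : ℝ)⁻¹ • ∑ j', x j' ω) k)) ℙ := by
  have hlaw (j : Fin n) : HasLaw (x j) (mvGaussian μ hR.posSemidef) ℙ :=
    ⟨(hmeas j).aemeasurable, hgauss j⟩
  have hmean (ω : Ω) : sampleMean (x · ω) = (n : ℝ)⁻¹ • ∑ j, x j ω := by
    simp [sampleMean_apply]
  have hS : Measurable fun (d : Fin n → Fin p → ℝ) (i k : Fin p) =>
      ((n : ℝ) - 1)⁻¹ * ∑ j, d j i * d j k := by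
    fun_prop
  have h := (indepFun_sampleMean_deviation hindep hlaw).comp measurable_id hS
  simp only [hmean] at h
  exact h

/-- for an i.i.d. sample `x_1, …, x_n ~ N(μ, R)` with `n ≥ 2` and `R`
symmetric positive definite, the sample mean `x̄ = (1/n) ∑ x_j` and the sample covariance
matrix `S = (1/(n-1)) ∑ (x_j - x̄)(x_j - x̄)'` (viewed entrywise) are independent. -/
theorem sample_mean_sample_covariance_independent
    {Ω : Type*} [MeasureSpace Ω] [IsProbabilityMeasure (ℙ : Measure Ω)]
    {p n : ℕ} (hn : 2 ≤ n) (μ : Fin p → ℝ) (R : Matrix (Fin p) (Fin p) ℝ) (hR : R.PosDef)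
    (x : Fin n → Ω → Fin p → ℝ) (hmeas : ∀ j, Measurable (x j))
    (hindep : iIndepFun x ℙ)
    (hgauss : ∀ j, Measure.map (x j) ℙ = mvGaussian μ hR.posSemidef) :
    IndepFun (fun ω => (n : ℝ)⁻¹ • ∑ j, x j ω)
      (fun ω (i k : Fin p) => ((n : ℝ) - 1)⁻¹ *
        ∑ j, (x j ω i - ((n : ℝ)⁻¹ • ∑ j', x j' ω) i) *
          (x j ω k - ((n : ℝ)⁻¹ • ∑ j', x j' ω) k)) ℙ :=
  sample_mean_sample_covariance_independent_general μ R hR x hmeas hindep hgauss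
end
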